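/- arXiv:2509.20613 — 5 statements merged into one kernel-verified Lean document; each statement's English description precedes it below -/
import Mathlib

section
/- Let F > 0, σ > 0, and B, D ∈ ℝ with B > D. Define Q(u) = (2/√π)·∫₀^u exp(−v²) dv and S(u) = Q(u)·F / √(Q(u)·F + 4σ²·u·(B−D)). If u* > 0 and the derivative of S at u* is zero (HasDerivAt S 0 u*), then F·Q'(u*)·Q(u*) = −(2·u*·Q'(u*) − Q(u*))·4σ²·(B−D), where Q'(u) = (2/√π)·exp(−u²) is the derivative of Q at u. -/
open Real

/-- First-order optimality condition for the S/N-maximizing aperture radius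
(Proposition 2 of the paper). -/
theorem snr_critical_point_equation (F σ B D : ℝ) (hF : 0 < F) (hσ : 0 < σ) (hBD : D < B)
    (Q : ℝ → ℝ) (hQ : Q = fun u => (2 / Real.sqrt π) * ∫ v in (0:ℝ)..u, Real.exp (-v ^ 2))
    (S : ℝ → ℝ)
    (hS : S = fun u => Q u * F / Real.sqrt (Q u * F + 4 * σ ^ 2 * u * (B - D)))
    (ustar : ℝ) (hustar : 0 < ustar) (hderiv : HasDerivAt S 0 ustar) :
    F * ((2 / Real.sqrt π) * Real.exp (-ustar ^ 2)) * Q ustar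
      = -(2 * ustar * ((2 / Real.sqrt π) * Real.exp (-ustar ^ 2)) - Q ustar)
          * (4 * σ ^ 2 * (B - D)) := by
  have hcont : Continuous fun v : ℝ => Real.exp (-v ^ 2) := by continuity
  set Qd : ℝ := (2 / Real.sqrt π) * Real.exp (-ustar ^ 2) with hQd
  have hQderiv : HasDerivAt Q Qd ustar := by
    rw [hQ]
    exact ((intervalIntegral.integral_hasDerivAt_right
      (hcont.intervalIntegrable _ _)
      (hcont.stronglyMeasurableAtFilter _ _)
      hcont.continuousAt).const_mul _)
  have hQpos : 0 < Q ustar := by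
    have hint : 0 < ∫ v in (0:ℝ)..ustar, Real.exp (-v ^ 2) :=
      intervalIntegral.intervalIntegral_pos_of_pos_on
        (hcont.intervalIntegrable _ _) (fun x _ => Real.exp_pos _) hustar
    have hsp : 0 < Real.sqrt π := Real.sqrt_pos.mpr Real.pi_pos
    rw [hQ]
    exact mul_pos (by positivity) hint
  have hgpos : 0 < Q ustar * F + 4 * σ ^ 2 * ustar * (B - D) := by
    have h1 : 0 < B - D := sub_pos.mpr hBD
    have h2 : 0 < 4 * σ ^ 2 * ustar * (B - D) := by positivity
    nlinarith [mul_pos hQpos hF]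
  set g : ℝ := Q ustar * F + 4 * σ ^ 2 * ustar * (B - D) with hg
  set gd : ℝ := Qd * F + 4 * σ ^ 2 * (B - D) with hgd
  have hgderiv : HasDerivAt (fun u => Q u * F + 4 * σ ^ 2 * u * (B - D)) gd ustar := by
    have h1 := hQderiv.mul_const F
    have h2 : HasDerivAt (fun u : ℝ => 4 * σ ^ 2 * u * (B - D)) (4 * σ ^ 2 * (B - D)) ustar := by
      simpa using (((hasDerivAt_id ustar).const_mul (4 * σ ^ 2)).mul_const (B - D))
    exact h1.add h2
  have hsqrtpos : 0 < Real.sqrt g := Real.sqrt_pos.mpr hgpos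
  have hsqrtderiv : HasDerivAt (fun u => Real.sqrt (Q u * F + 4 * σ ^ 2 * u * (B - D)))
      (gd / (2 * Real.sqrt g)) ustar := hgderiv.sqrt (ne_of_gt hgpos)
  have hSderiv : HasDerivAt S
      ((Qd * F * Real.sqrt g - Q ustar * F * (gd / (2 * Real.sqrt g))) / (Real.sqrt g) ^ 2)
      ustar := by
    rw [hS]
    exact (hQderiv.mul_const F).div hsqrtderiv (ne_of_gt hsqrtpos)
  have h0 := hderiv.unique hSderiv
  have hsq : Real.sqrt g ^ 2 = g := Real.sq_sqrt hgpos.le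
  have hE : 2 * Qd * F * g = Q ustar * F * gd := by
    have hs := hsqrtpos.ne'
    field_simp at h0
    linear_combination -h0 - 2 * Qd * F * hsq
  have hE2 : 2 * Qd * g = Q ustar * gd := by
    have : F * (2 * Qd * g) = F * (Q ustar * gd) := by ring_nf; ring_nf at hE; linarith
    exact mul_left_cancel₀ hF.ne' this
  rw [hg, hgd] at hE2
  linear_combination hE2
end

section
/- Let F > 0 and σ > 0. Define erf(y) = (2/√π)·∫₀^y exp(−v²) dv, erfi(y) = (2/√π)·∫₀^y exp(v²) dv, and 𝐼_F(u) = (1/F)·(erf(u/(√2·σ)) − 2u²/(π·σ²·erfi(u/(√2·σ)))) for u > 0. Then 𝐼_F(u) tends to 1/F as u → ∞ (Tendsto 𝐼_F atTop (nhds (1/F))). -/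
set_option maxHeartbeats 800000

open Real Filter MeasureTheory intervalIntegral

lemma quartic_le_exp_sq (v : ℝ) : v ^ 4 / 4 ≤ Real.exp (v ^ 2) := by
  have h := Real.add_one_le_exp (v ^ 2 / 2)
  have h2 : Real.exp (v ^ 2) = Real.exp (v ^ 2 / 2) ^ 2 := by
    rw [← Real.exp_nat_mul]; ring_nf
  nlinarith [sq_nonneg v, Real.exp_pos (v ^ 2 / 2)]

lemma erfi_lower (y : ℝ) (hy : 0 ≤ y) :
    y ^ 5 / 20 ≤ ∫ v in (0:ℝ)..y, Real.exp (v ^ 2) := by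
  have h1 : ∫ v in (0:ℝ)..y, v ^ 4 / 4 ≤ ∫ v in (0:ℝ)..y, Real.exp (v ^ 2) := by
    apply intervalIntegral.integral_mono_on hy
    · exact (IntervalIntegrable.div_const (intervalIntegral.intervalIntegrable_pow 4) 4)
    · exact (Real.continuous_exp.comp (continuous_pow 2)).intervalIntegrable 0 y
    · intro x _; exact quartic_le_exp_sq x
  have h2 : ∫ v in (0:ℝ)..y, v ^ 4 / 4 = y ^ 5 / 20 := by
    rw [intervalIntegral.integral_div, integral_pow]; ring
  linarith

/-- The joint Fisher information for the flux, `𝐼_F(u) = (1/F)(erf(u/(√2σ)) −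
2u²/(πσ² erfi(u/(√2σ))))`, tends to `1/F` as the aperture radius `u → ∞`
(Theorem 2 of the paper). -/
theorem fisherInfoFlux_tendsto_atTop (F σ : ℝ) (hF : 0 < F) (hσ : 0 < σ)
    (IF : ℝ → ℝ)
    (hIF : ∀ u : ℝ, 0 < u → IF u =
      (1 / F) * (((2 / Real.sqrt π) * ∫ v in (0:ℝ)..(u / (Real.sqrt 2 * σ)), Real.exp (-v ^ 2))
        - 2 * u ^ 2 / (π * σ ^ 2 *
            ((2 / Real.sqrt π) * ∫ v in (0:ℝ)..(u / (Real.sqrt 2 * σ)), Real.exp (v ^ 2))))) :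
    Tendsto IF atTop (nhds (1 / F)) := by
  have hc : 0 < Real.sqrt 2 * σ := mul_pos (Real.sqrt_pos.mpr two_pos) hσ
  set c := Real.sqrt 2 * σ with hcdef
  have hy : Tendsto (fun u : ℝ => u / c) atTop atTop := tendsto_id.atTop_div_const hc
  have hπ : 0 < Real.sqrt π := Real.sqrt_pos.mpr Real.pi_pos
  -- first term tends to 1
  have hA : Tendsto (fun u : ℝ =>
      (2 / Real.sqrt π) * ∫ v in (0:ℝ)..(u / c), Real.exp (-v ^ 2)) atTop (nhds 1) := by
    have hint : IntegrableOn (fun x : ℝ => Real.exp (-x ^ 2)) (Set.Ioi 0) := by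
      have := (integrable_exp_neg_mul_sq (one_pos)).integrableOn (s := Set.Ioi (0:ℝ))
      simpa using this
    have h1 := intervalIntegral_tendsto_integral_Ioi 0 hint hy
    have hval : (∫ x : ℝ in Set.Ioi 0, Real.exp (-x ^ 2)) = Real.sqrt π / 2 := by
      have := integral_gaussian_Ioi 1
      simpa using this
    rw [hval] at h1
    have := h1.const_mul (2 / Real.sqrt π)
    convert this using 2
    field_simp
  -- second term tends to 0
  have hB : Tendsto (fun u : ℝ =>
      2 * u ^ 2 / (π * σ ^ 2 * ((2 / Real.sqrt π) * ∫ v in (0:ℝ)..(u / c), Real.exp (v ^ 2))))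
      atTop (nhds 0) := by
    set K : ℝ := π * σ ^ 2 * ((2 / Real.sqrt π) * (1 / (20 * c ^ 5))) with hK
    have hKpos : 0 < K := by positivity
    have hbound : Tendsto (fun u : ℝ => 2 * u ^ 2 / (K * u ^ 5)) atTop (nhds 0) := by
      have : Tendsto (fun u : ℝ => (2 / K) * (u ^ 3)⁻¹) atTop (nhds ((2 / K) * 0)) :=
        ((tendsto_pow_atTop (by norm_num : 3 ≠ 0)).inv_tendsto_atTop).const_mul _
      rw [mul_zero] at this
      apply this.congr'
      filter_upwards [eventually_gt_atTop (0:ℝ)] with u hu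
      field_simp
    apply tendsto_of_tendsto_of_tendsto_of_le_of_le' tendsto_const_nhds hbound
    · filter_upwards [eventually_gt_atTop (0:ℝ)] with u hu
      have hyu : (0:ℝ) ≤ u / c := le_of_lt (div_pos hu hc)
      have hI : (0:ℝ) ≤ ∫ v in (0:ℝ)..(u / c), Real.exp (v ^ 2) :=
        le_trans (by positivity) (erfi_lower _ hyu)
      positivity
    · filter_upwards [eventually_gt_atTop (0:ℝ)] with u hu
      have hyu : (0:ℝ) ≤ u / c := le_of_lt (div_pos hu hc)
      have hI := erfi_lower (u / c) hyu
      set J : ℝ := ∫ v in (0:ℝ)..(u / c), Real.exp (v ^ 2) with hJ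
      have hJ0 : 0 < J := lt_of_lt_of_le (by positivity) hI
      have hlow : K * u ^ 5 ≤ π * σ ^ 2 * ((2 / Real.sqrt π) * J) := by
        have h5 : (u / c) ^ 5 = u ^ 5 / c ^ 5 := div_pow u c 5
        rw [h5] at hI
        have hmul : π * σ ^ 2 * (2 / Real.sqrt π) * (u ^ 5 / c ^ 5 / 20) ≤
            π * σ ^ 2 * (2 / Real.sqrt π) * J :=
          mul_le_mul_of_nonneg_left hI (by positivity)
        have heq : K * u ^ 5 = π * σ ^ 2 * (2 / Real.sqrt π) * (u ^ 5 / c ^ 5 / 20) := by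
          rw [hK]; ring
        linarith
      have hKu5 : 0 < K * u ^ 5 := mul_pos hKpos (pow_pos hu 5)
      gcongr
  -- combine
  have hmain : Tendsto (fun u : ℝ =>
      (1 / F) * (((2 / Real.sqrt π) * ∫ v in (0:ℝ)..(u / c), Real.exp (-v ^ 2))
        - 2 * u ^ 2 / (π * σ ^ 2 *
            ((2 / Real.sqrt π) * ∫ v in (0:ℝ)..(u / c), Real.exp (v ^ 2)))))
      atTop (nhds (1 / F)) := by
    have := (hA.sub hB).const_mul (1 / F)
    simpa using this
  apply hmain.congr'
  filter_upwards [eventually_gt_atTop (0:ℝ)] with u hu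
  exact (hIF u hu).symm
end

section
/- Let F > 0 and σ > 0. Define erf(y) = (2/√π)·∫₀^y exp(−v²) dv, erfi(y) = (2/√π)·∫₀^y exp(v²) dv, and 𝐼_F(u) = (1/F)·(erf(u/(√2·σ)) − 2u²/(π·σ²·erfi(u/(√2·σ)))) for u > 0. Then the derivative of 𝐼_F tends to 0 as u → ∞: Tendsto (fun u => deriv 𝐼_F u) atTop (nhds 0). -/
/-!
In the variable `x = u / (√2 σ)` one has `F · 𝐼_F = erf x - k x² / erfi x` with `k = 4 / π`.
Since `erfi x ≥ (2 / √π) exp ((x - 1)²)` for `x ≥ 1`, the ratio `h x = x exp (x² / 2) / erfi x`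
has Gaussian decay, and the derivative of `erf x - k x² / erfi x` equals
`(2 / √π) exp (-x²) - 2k h(x) exp (-x² / 2) + (2k / √π) h(x)²`, so it tends to `0`.
-/

open Real Filter Topology MeasureTheory intervalIntegral

noncomputable def erf (y : ℝ) : ℝ := 2 / √π * ∫ v in (0 : ℝ)..y, exp (-v ^ 2)

noncomputable def erfi (y : ℝ) : ℝ := 2 / √π * ∫ v in (0 : ℝ)..y, exp (v ^ 2)

lemma hasDerivAt_erf (x : ℝ) : HasDerivAt erf (2 / √π * exp (-x ^ 2)) x :=
  ((by fun_prop : Continuous fun v : ℝ => exp (-v ^ 2)).integral_hasStrictDerivAt 0 x)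
    |>.hasDerivAt.const_mul _

lemma hasDerivAt_erfi (x : ℝ) : HasDerivAt erfi (2 / √π * exp (x ^ 2)) x :=
  ((by fun_prop : Continuous fun v : ℝ => exp (v ^ 2)).integral_hasStrictDerivAt 0 x)
    |>.hasDerivAt.const_mul _

lemma erfi_pos {x : ℝ} (hx : 0 < x) : 0 < erfi x := by
  have : 0 < ∫ v in (0 : ℝ)..x, exp (v ^ 2) :=
    intervalIntegral_pos_of_pos ((by fun_prop : Continuous _).intervalIntegrable _ _)
      (fun v => exp_pos _) hx
  unfold erfi
  positivity

lemma exp_sub_one_sq_le_erfi {x : ℝ} (hx : 1 ≤ x) :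
    2 / √π * exp ((x - 1) ^ 2) ≤ erfi x := by
  have hint : IntervalIntegrable (fun v : ℝ => exp (v ^ 2)) volume (x - 1) x :=
    (by fun_prop : Continuous _).intervalIntegrable _ _
  have hlast : exp ((x - 1) ^ 2) ≤ ∫ v in (x - 1)..x, exp (v ^ 2) := by
    calc exp ((x - 1) ^ 2) = ∫ _ in (x - 1)..x, exp ((x - 1) ^ 2) := by simp
      _ ≤ ∫ v in (x - 1)..x, exp (v ^ 2) :=
        integral_mono_on (by linarith) intervalIntegrable_const hint fun v hv =>
          exp_le_exp.2 (pow_le_pow_left₀ (by linarith) hv.1 2)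
  have hfull : ∫ v in (x - 1)..x, exp (v ^ 2) ≤ ∫ v in (0 : ℝ)..x, exp (v ^ 2) :=
    integral_mono_interval (by linarith) (by linarith) le_rfl
      (Eventually.of_forall fun v => (exp_pos _).le)
      ((by fun_prop : Continuous _).intervalIntegrable _ _)
  unfold erfi
  gcongr
  exact hlast.trans hfull

lemma tendsto_pow_mul_exp_neg_mul_sq_add_mul_atTop {a : ℝ} (ha : 0 < a) (b : ℝ) (n : ℕ) :
    Tendsto (fun x : ℝ => x ^ n * exp (-(a * x ^ 2) + b * x)) atTop (𝓝 0) := by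
  refine squeeze_zero' ?_ ?_ (tendsto_pow_mul_exp_neg_atTop_nhds_zero n)
  · filter_upwards [eventually_ge_atTop 0] with x hx
    positivity
  · filter_upwards [eventually_ge_atTop 0, eventually_ge_atTop ((b + 1) / a)] with x hx hxab
    have : b + 1 ≤ a * x := by rwa [div_le_iff₀' ha] at hxab
    gcongr
    nlinarith

lemma tendsto_mul_exp_half_sq_div_erfi :
    Tendsto (fun x => x * exp (x ^ 2 / 2) / erfi x) atTop (𝓝 0) := by
  have hbound := (tendsto_pow_mul_exp_neg_mul_sq_add_mul_atTop (a := 1 / 2) (by norm_num) 2 1)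
    |>.const_mul (√π / 2 * exp (-1))
  rw [mul_zero] at hbound
  refine squeeze_zero' ?_ ?_ hbound
  · filter_upwards [eventually_gt_atTop 0] with x hx
    have := erfi_pos hx
    positivity
  · filter_upwards [eventually_ge_atTop 1] with x hx
    calc x * exp (x ^ 2 / 2) / erfi x ≤ x * exp (x ^ 2 / 2) / (2 / √π * exp ((x - 1) ^ 2)) := by
          gcongr
          exact exp_sub_one_sq_le_erfi hx
      _ = √π / 2 * exp (-1) * (x ^ 1 * exp (-(1 / 2 * x ^ 2) + 2 * x)) := by
          have : exp (x ^ 2 / 2)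
              = exp (-1) * exp (-(1 / 2 * x ^ 2) + 2 * x) * exp ((x - 1) ^ 2) := by
            rw [← exp_add, ← exp_add]
            ring_nf
          rw [this]
          field_simp

lemma hasDerivAt_erf_sub_mul_sq_div_erfi (k : ℝ) {x : ℝ} (hx : 0 < x) :
    HasDerivAt (fun x => erf x - k * x ^ 2 / erfi x)
      (2 / √π * exp (-x ^ 2) - 2 * k * x / erfi x
        + 2 / √π * k * x ^ 2 * exp (x ^ 2) / erfi x ^ 2) x := by
  have hquot := ((hasDerivAt_pow 2 x).const_mul k).fun_div (hasDerivAt_erfi x) (erfi_pos hx).ne'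
  refine ((hasDerivAt_erf x).sub hquot).congr_deriv ?_
  field_simp [(erfi_pos hx).ne']
  ring

lemma tendsto_deriv_erf_sub_mul_sq_div_erfi (k : ℝ) :
    Tendsto (deriv fun x => erf x - k * x ^ 2 / erfi x) atTop (𝓝 0) := by
  have hdecay : Tendsto (fun x : ℝ => (exp (x ^ 2 / 2))⁻¹) atTop (𝓝 0) :=
    tendsto_inv_atTop_zero.comp <| tendsto_exp_atTop.comp <|
      (tendsto_pow_atTop two_ne_zero).atTop_div_const two_pos
  have hratio := tendsto_mul_exp_half_sq_div_erfi
  have hlim := (((hdecay.pow 2).const_mul (2 / √π)).sub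
    ((hratio.mul hdecay).const_mul (2 * k))).add ((hratio.pow 2).const_mul (2 / √π * k))
  simp only [zero_pow two_ne_zero, mul_zero, sub_zero, add_zero] at hlim
  refine hlim.congr' ?_
  filter_upwards [eventually_gt_atTop 0] with x hx
  rw [(hasDerivAt_erf_sub_mul_sq_div_erfi k hx).deriv]
  have hsq : exp (x ^ 2) = exp (x ^ 2 / 2) ^ 2 := by rw [← exp_nat_mul]; ring_nf
  have hneg : exp (-x ^ 2) = (exp (x ^ 2 / 2) ^ 2)⁻¹ := by rw [← hsq, exp_neg]
  rw [hneg, hsq]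
  field_simp [(erfi_pos hx).ne']

theorem fisherInfoFlux_deriv_tendsto_zero_general (F σ : ℝ) (hσ : 0 < σ)
    (IF : ℝ → ℝ)
    (hIF : ∀ u : ℝ, 0 < u → IF u =
      (1 / F) * (((2 / Real.sqrt π) * ∫ v in (0:ℝ)..(u / (Real.sqrt 2 * σ)), Real.exp (-v ^ 2))
        - 2 * u ^ 2 / (π * σ ^ 2 *
            ((2 / Real.sqrt π) * ∫ v in (0:ℝ)..(u / (Real.sqrt 2 * σ)), Real.exp (v ^ 2))))) :
    Tendsto (fun u => deriv IF u) atTop (nhds 0) := by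
  set s := √2 * σ
  have hs : 0 < s := by positivity
  set g := fun x => erf x - 2 * s ^ 2 / (π * σ ^ 2) * x ^ 2 / erfi x
  have hIF_eq : ∀ u > 0, IF =ᶠ[𝓝 u] fun u => 1 / F * g (s⁻¹ * u) := fun u hu => by
    filter_upwards [eventually_gt_nhds hu] with w hw
    have hIFw : IF w = 1 / F * (erf (w / s) - 2 * w ^ 2 / (π * σ ^ 2 * erfi (w / s))) := hIF w hw
    rw [hIFw, ← div_eq_inv_mul]
    simp only [g]
    field_simp
  have hderiv : (fun u => deriv IF u) =ᶠ[atTop] fun u => 1 / F * (s⁻¹ * deriv g (s⁻¹ * u)) := by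
    filter_upwards [eventually_gt_atTop 0] with u hu
    rw [(hIF_eq u hu).deriv_eq, deriv_const_mul_field, deriv_comp_mul_left, smul_eq_mul]
  rw [tendsto_congr' hderiv]
  simpa using (((tendsto_deriv_erf_sub_mul_sq_div_erfi _).comp
    (tendsto_id.const_mul_atTop (inv_pos.2 hs))).const_mul s⁻¹).const_mul (1 / F)

/-- The derivative of the joint Fisher information for the flux,
`𝐼_F(u) = (1/F)(erf(u/(√2σ)) − 2u²/(πσ² erfi(u/(√2σ))))`, tends to `0` as the
aperture radius `u → ∞` (Theorem 2 of the paper). -/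
theorem fisherInfoFlux_deriv_tendsto_zero (F σ : ℝ) (hF : 0 < F) (hσ : 0 < σ)
    (IF : ℝ → ℝ)
    (hIF : ∀ u : ℝ, 0 < u → IF u =
      (1 / F) * (((2 / Real.sqrt π) * ∫ v in (0:ℝ)..(u / (Real.sqrt 2 * σ)), Real.exp (-v ^ 2))
        - 2 * u ^ 2 / (π * σ ^ 2 *
            ((2 / Real.sqrt π) * ∫ v in (0:ℝ)..(u / (Real.sqrt 2 * σ)), Real.exp (v ^ 2))))) :
    Tendsto (fun u => deriv IF u) atTop (nhds 0) :=
  fisherInfoFlux_deriv_tendsto_zero_general F σ hσ IF hIF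
end

section
/- Let ι be an index type, λ : ι → ℝ with λ i > 0 for all i, and g : ι → ℝ. For a nonempty finite set S of indices, define 𝐼_F(S) = ∑_{i∈S} (g i)²/λ i − (∑_{i∈S} (g i)/λ i)² / (∑_{i∈S} 1/λ i). Then for all nonempty finite sets S ⊆ T, 𝐼_F(S) ≤ 𝐼_F(T). -/
lemma fisher_min {ι : Type*} (lam : ι → ℝ) (hlam : ∀ i, 0 < lam i)
    (g : ι → ℝ) (S : Finset ι) (hS : S.Nonempty) (c : ℝ) :
    (∑ i ∈ S, (g i) ^ 2 / lam i) - (∑ i ∈ S, g i / lam i) ^ 2 / (∑ i ∈ S, 1 / lam i)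
      ≤ ∑ i ∈ S, (g i - c) ^ 2 / lam i := by
  have hC : 0 < ∑ i ∈ S, 1 / lam i :=
    Finset.sum_pos (fun i _ => one_div_pos.mpr (hlam i)) hS
  have hexp : ∑ i ∈ S, (g i - c) ^ 2 / lam i
      = (∑ i ∈ S, (g i) ^ 2 / lam i) - 2 * c * (∑ i ∈ S, g i / lam i)
        + c ^ 2 * (∑ i ∈ S, 1 / lam i) := by
    rw [Finset.mul_sum, Finset.mul_sum, ← Finset.sum_sub_distrib, ← Finset.sum_add_distrib]
    refine Finset.sum_congr rfl fun i _ => ?_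
    have h := (hlam i).ne'
    field_simp
    ring
  rw [hexp]
  set A := ∑ i ∈ S, (g i) ^ 2 / lam i
  set B := ∑ i ∈ S, g i / lam i
  set C := ∑ i ∈ S, 1 / lam i
  have key : 0 ≤ (B - c * C) ^ 2 / C := by positivity
  have hrw : (B - c * C) ^ 2 / C = B ^ 2 / C - 2 * c * B + c ^ 2 * C := by
    field_simp
    ring
  linarith [hrw ▸ key]

/-- Monotonicity of the joint Fisher information for the flux with respect to the
set of pixels used (Remark 1 of the paper). -/
theorem fisherInfoFlux_monotone {ι : Type*} (lam : ι → ℝ) (hlam : ∀ i, 0 < lam i)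
    (g : ι → ℝ) (S T : Finset ι) (hS : S.Nonempty) (hST : S ⊆ T) :
    (∑ i ∈ S, (g i) ^ 2 / lam i) - (∑ i ∈ S, g i / lam i) ^ 2 / (∑ i ∈ S, 1 / lam i)
      ≤ (∑ i ∈ T, (g i) ^ 2 / lam i) - (∑ i ∈ T, g i / lam i) ^ 2 / (∑ i ∈ T, 1 / lam i) := by
  have hT : T.Nonempty := hS.mono hST
  have hCT : 0 < ∑ i ∈ T, 1 / lam i :=
    Finset.sum_pos (fun i _ => one_div_pos.mpr (hlam i)) hT
  set c : ℝ := (∑ i ∈ T, g i / lam i) / (∑ i ∈ T, 1 / lam i) with hc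
  have h1 := fisher_min lam hlam g S hS c
  have h2 : ∑ i ∈ S, (g i - c) ^ 2 / lam i ≤ ∑ i ∈ T, (g i - c) ^ 2 / lam i :=
    Finset.sum_le_sum_of_subset_of_nonneg hST (fun i _ _ => div_nonneg (sq_nonneg _) (hlam i).le)
  have h3 : ∑ i ∈ T, (g i - c) ^ 2 / lam i
      = (∑ i ∈ T, (g i) ^ 2 / lam i) - (∑ i ∈ T, g i / lam i) ^ 2 / (∑ i ∈ T, 1 / lam i) := by
    have hexp : ∑ i ∈ T, (g i - c) ^ 2 / lam i
        = (∑ i ∈ T, (g i) ^ 2 / lam i) - 2 * c * (∑ i ∈ T, g i / lam i)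
          + c ^ 2 * (∑ i ∈ T, 1 / lam i) := by
      rw [Finset.mul_sum, Finset.mul_sum, ← Finset.sum_sub_distrib, ← Finset.sum_add_distrib]
      refine Finset.sum_congr rfl fun i _ => ?_
      have h := (hlam i).ne'
      field_simp
      ring
    rw [hexp, hc]
    field_simp
    ring
  linarith
end

section
/- Let ι be an index type, λ : ι → ℝ with λ i > 0 for all i, and g : ι → ℝ. For a finite set S of indices containing some index i with g i ≠ 0, define 𝐼_B(S) = ∑_{i∈S} 1/λ i − (∑_{i∈S} (g i)/λ i)² / (∑_{i∈S} (g i)²/λ i). Then for all finite sets S ⊆ T such that some i ∈ S has g i ≠ 0, 𝐼_B(S) ≤ 𝐼_B(T). -/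
/-- Monotonicity of the joint Fisher information for the background with respect to the
set of pixels used (Remark 1 of the paper). -/
theorem fisherInfoBackground_monotone {ι : Type*} (lam : ι → ℝ) (hlam : ∀ i, 0 < lam i)
    (g : ι → ℝ) (S T : Finset ι) (hS : ∃ i ∈ S, g i ≠ 0) (hST : S ⊆ T) :
    (∑ i ∈ S, 1 / lam i) - (∑ i ∈ S, g i / lam i) ^ 2 / (∑ i ∈ S, (g i) ^ 2 / lam i)
      ≤ (∑ i ∈ T, 1 / lam i) - (∑ i ∈ T, g i / lam i) ^ 2 / (∑ i ∈ T, (g i) ^ 2 / lam i) := by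
  obtain ⟨j, hjS, hgj⟩ := hS
  set A1 := ∑ i ∈ S, 1 / lam i
  set B1 := ∑ i ∈ S, g i / lam i
  set C1 := ∑ i ∈ S, (g i) ^ 2 / lam i
  set A2 := ∑ i ∈ T, 1 / lam i
  set B2 := ∑ i ∈ T, g i / lam i
  set C2 := ∑ i ∈ T, (g i) ^ 2 / lam i
  have hterm : ∀ i, (0:ℝ) ≤ (g i) ^ 2 / lam i := fun i => div_nonneg (sq_nonneg _) (hlam i).le
  have hj : 0 < (g j) ^ 2 / lam j :=
    div_pos (by simpa using pow_pos (abs_pos.mpr hgj) 2) (hlam j)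
  have hC1 : 0 < C1 :=
    Finset.sum_pos' (fun i _ => hterm i) ⟨j, hjS, by simpa using hj⟩
  have hC2 : 0 < C2 :=
    Finset.sum_pos' (fun i _ => hterm i) ⟨j, hST hjS, by simpa using hj⟩
  set t := B2 / C2 with ht
  have hsum : ∀ U : Finset ι,
      ∑ i ∈ U, (1 - t * g i) ^ 2 / lam i
        = (∑ i ∈ U, 1 / lam i) - 2 * t * (∑ i ∈ U, g i / lam i)
          + t ^ 2 * (∑ i ∈ U, (g i) ^ 2 / lam i) := by
    intro U
    rw [Finset.mul_sum, Finset.mul_sum, ← Finset.sum_sub_distrib, ← Finset.sum_add_distrib]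
    refine Finset.sum_congr rfl fun i _ => ?_
    have := (hlam i).ne'
    field_simp
    ring
  have h1 : A1 - B1 ^ 2 / C1 ≤ A1 - 2 * t * B1 + t ^ 2 * C1 := by
    have key : 2 * t * B1 - t ^ 2 * C1 ≤ B1 ^ 2 / C1 := by
      rw [le_div_iff₀ hC1]
      nlinarith [sq_nonneg (t * C1 - B1)]
    linarith
  have h2 : ∑ i ∈ S, (1 - t * g i) ^ 2 / lam i ≤ ∑ i ∈ T, (1 - t * g i) ^ 2 / lam i := by
    apply Finset.sum_le_sum_of_subset_of_nonneg hST
    intro i _ _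
    exact div_nonneg (sq_nonneg _) (hlam i).le
  have h3 : A2 - 2 * t * B2 + t ^ 2 * C2 = A2 - B2 ^ 2 / C2 := by
    rw [ht]
    field_simp
    ring
  calc A1 - B1 ^ 2 / C1 ≤ A1 - 2 * t * B1 + t ^ 2 * C1 := h1
    _ = ∑ i ∈ S, (1 - t * g i) ^ 2 / lam i := (hsum S).symm
    _ ≤ ∑ i ∈ T, (1 - t * g i) ^ 2 / lam i := h2
    _ = A2 - 2 * t * B2 + t ^ 2 * C2 := hsum T
    _ = A2 - B2 ^ 2 / C2 := h3
end
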